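/- For all integers k, ℓ ≥ 1 and m ≥ 0, one has {Ĵ_ℓ, Î_k}_m(X,Y) = tr(X^{k+ℓ+m−2}) for all (X,Y) ∈ M; in particular {Ĵ_ℓ, Î_k}_m = (k+ℓ+m−2) Î_{k+ℓ+m−2} whenever k+ℓ+m ≥ 3, while {Ĵ_1, Î_1}_0 is the constant function n. -/

import Mathlib

attribute [local instance] Matrix.normedAddCommGroup Matrix.normedSpace

/-- The phase space `M = Mat_n(ℝ) × Mat_n(ℝ)`. -/
abbrev MM (n : ℕ) := Matrix (Fin n) (Fin n) ℝ × Matrix (Fin n) (Fin n) ℝ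

/-- The gradient matrix `∇_X f`, with `(∇_X f)_{ij} = ∂f/∂X_{ji}`. -/
noncomputable def gradX {n : ℕ} (f : MM n → ℝ) (p : MM n) : Matrix (Fin n) (Fin n) ℝ :=
  fun i j => fderiv ℝ f p (Matrix.single j i 1, 0)

/-- The gradient matrix `∇_Y f`, with `(∇_Y f)_{ij} = ∂f/∂Y_{ji}`. -/
noncomputable def gradY {n : ℕ} (f : MM n → ℝ) (p : MM n) : Matrix (Fin n) (Fin n) ℝ :=
  fun i j => fderiv ℝ f p (0, Matrix.single j i 1)

/-- The `m`-th bracket of the Calogero-Moser hierarchy: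
`{f,g}_m(X,Y) = tr(X^m (∇_Y f ∇_X g − ∇_Y g ∇_X f))
  + Σ_{i=1}^{m} tr(Y X^{m−i} (∇_Y f X^{i−1} ∇_Y g − ∇_Y g X^{i−1} ∇_Y f))`. -/
noncomputable def pbracket {n : ℕ} (m : ℕ) (f g : MM n → ℝ) (p : MM n) : ℝ :=
  (p.1 ^ m * (gradY f p * gradX g p - gradY g p * gradX f p)).trace +
  ∑ i ∈ Finset.range m,
    (p.2 * p.1 ^ (m - 1 - i) *
      (gradY f p * p.1 ^ i * gradY g p - gradY g p * p.1 ^ i * gradY f p)).trace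

/-- Smoothness of a function on `M`. -/
def SmoothFn {n : ℕ} (f : MM n → ℝ) : Prop := ContDiff ℝ (⊤ : ℕ∞) f

/-- The Calogero-Moser Hamiltonian `Î_k(X,Y) = (1/k) tr(X^k)`. -/
noncomputable def Ihat {n : ℕ} (k : ℕ) (p : MM n) : ℝ := (1 / (k : ℝ)) * (p.1 ^ k).trace

/-- The Hamiltonian `Ĵ_ℓ(X,Y) = tr(X^{ℓ−1} Y)`. -/
noncomputable def Jhat {n : ℕ} (l : ℕ) (p : MM n) : ℝ := (p.1 ^ (l - 1) * p.2).trace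


/-- Matrix multiplication as a continuous bilinear map. -/
noncomputable def mulL (n : ℕ) : Matrix (Fin n) (Fin n) ℝ →L[ℝ]
    Matrix (Fin n) (Fin n) ℝ →L[ℝ] Matrix (Fin n) (Fin n) ℝ :=
  LinearMap.toContinuousLinearMap
  { toFun := fun A => LinearMap.toContinuousLinearMap (LinearMap.mulLeft ℝ A)
    map_add' := by intro A B; ext U; simp [add_mul]
    map_smul' := by intro c A; ext U; simp }

@[simp] lemma mulL_apply {n : ℕ} (A B : Matrix (Fin n) (Fin n) ℝ) : mulL n A B = A * B := by
  simp [mulL]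

/-- Candidate derivative of `X ↦ X^k`. -/
noncomputable def powD (n k : ℕ) (X : Matrix (Fin n) (Fin n) ℝ) :
    Matrix (Fin n) (Fin n) ℝ →L[ℝ] Matrix (Fin n) (Fin n) ℝ :=
  LinearMap.toContinuousLinearMap
  { toFun := fun U => ∑ i ∈ Finset.range k, X ^ i * U * X ^ (k - 1 - i)
    map_add' := by intro U V; simp [mul_add, add_mul, Finset.sum_add_distrib]
    map_smul' := by intro c U; simp [Finset.smul_sum, smul_mul_assoc, mul_smul_comm] }

@[simp] lemma powD_apply {n k : ℕ} (X U : Matrix (Fin n) (Fin n) ℝ) :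
    powD n k X U = ∑ i ∈ Finset.range k, X ^ i * U * X ^ (k - 1 - i) := by
  simp [powD]

lemma hasFDerivAt_matpow {n : ℕ} (k : ℕ) (X : Matrix (Fin n) (Fin n) ℝ) :
    HasFDerivAt (fun Y : Matrix (Fin n) (Fin n) ℝ => Y ^ k) (powD n k X) X := by
  induction k with
  | zero =>
      have : powD n 0 X = 0 := by ext U; simp
      rw [this]
      simpa using hasFDerivAt_const (1 : Matrix (Fin n) (Fin n) ℝ) X
  | succ k ih =>
      have h := (mulL n).hasFDerivAt_of_bilinear (hasFDerivAt_id X) ih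
      have hfun : (fun Y : Matrix (Fin n) (Fin n) ℝ => mulL n (id Y) (Y ^ k)) =
          fun Y : Matrix (Fin n) (Fin n) ℝ => Y ^ (k + 1) := by
        funext Y; simp [pow_succ']
      replace h := h.congr_of_eventuallyEq (Filter.Eventually.of_forall fun Y => congrFun hfun.symm Y)
      refine h.congr_fderiv ?_
      ext U : 1
      change X * powD n k X U + U * X ^ k = powD n (k + 1) X U
      simp [Finset.sum_range_succ', Finset.mul_sum, pow_succ', Nat.sub_sub, mul_assoc,
        add_comm]

noncomputable def traceL (n : ℕ) : Matrix (Fin n) (Fin n) ℝ →L[ℝ] ℝ :=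
  LinearMap.toContinuousLinearMap (Matrix.traceLinearMap (Fin n) ℝ ℝ)

@[simp] lemma traceL_apply {n : ℕ} (A : Matrix (Fin n) (Fin n) ℝ) : traceL n A = A.trace := by
  simp [traceL]

lemma trace_mul_stdBasis {n : ℕ} (A : Matrix (Fin n) (Fin n) ℝ) (i j : Fin n) :
    (A * Matrix.single j i (1 : ℝ)).trace = A i j := by
  simp [Matrix.trace, Matrix.diag, Matrix.mul_apply, Matrix.single, ite_and,
    Finset.sum_ite_eq, Finset.sum_ite_eq']

lemma hasFDerivAt_Ihat {n : ℕ} (k : ℕ) (p : MM n) :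
    HasFDerivAt (Ihat k) ((1 / (k : ℝ)) • ((traceL n).comp
      ((powD n k p.1).comp (ContinuousLinearMap.fst ℝ _ _)))) p := by
  have h1 : HasFDerivAt (fun q : MM n => q.1 ^ k)
      ((powD n k p.1).comp (ContinuousLinearMap.fst ℝ _ _)) p :=
    (hasFDerivAt_matpow k p.1).comp p (hasFDerivAt_fst)
  have h2 := ((traceL n).hasFDerivAt).comp p h1
  have h3 := h2.const_mul (1 / (k : ℝ))
  have : Ihat (n := n) k = fun q : MM n => (1 / (k : ℝ)) * traceL n (q.1 ^ k) := by
    funext q; simp [Ihat]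
  rw [this]
  exact h3

lemma gradY_Ihat {n : ℕ} (k : ℕ) (p : MM n) : gradY (Ihat k) p = 0 := by
  funext i j
  rw [gradY, (hasFDerivAt_Ihat k p).fderiv]
  simp

lemma gradX_Ihat {n : ℕ} (k : ℕ) (hk : 1 ≤ k) (p : MM n) :
    gradX (Ihat k) p = p.1 ^ (k - 1) := by
  funext i j
  rw [gradX, (hasFDerivAt_Ihat k p).fderiv]
  have hsum : ∀ i' ∈ Finset.range k,
      (p.1 ^ i' * Matrix.single j i (1:ℝ) * p.1 ^ (k - 1 - i')).trace
        = (p.1 ^ (k - 1)) i j := by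
    intro i' hi'
    rw [Matrix.trace_mul_cycle]
    have : p.1 ^ (k - 1 - i') * p.1 ^ i' = p.1 ^ (k - 1) := by
      rw [← pow_add]
      congr 1
      have := Finset.mem_range.mp hi'
      omega
    rw [this, trace_mul_stdBasis]
  simp only [ContinuousLinearMap.coe_smul', Pi.smul_apply, ContinuousLinearMap.coe_comp',
    Function.comp_apply, ContinuousLinearMap.coe_fst', traceL_apply, powD_apply,
    Matrix.trace_sum, smul_eq_mul]
  rw [Finset.sum_congr rfl hsum, Finset.sum_const, Finset.card_range]
  have hk0 : (k : ℝ) ≠ 0 := Nat.cast_ne_zero.mpr (by omega)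
  field_simp
  rw [nsmul_eq_mul]

lemma hasFDerivAt_Jhat {n : ℕ} (l : ℕ) (p : MM n) :
    HasFDerivAt (Jhat l)
      ((traceL n).comp
        ((mulL n).precompR (MM n) (p.1 ^ (l - 1))
            ((ContinuousLinearMap.snd ℝ _ _)) +
          (mulL n).precompL (MM n)
            ((powD n (l - 1) p.1).comp (ContinuousLinearMap.fst ℝ _ _)) p.2)) p := by
  have h1 : HasFDerivAt (fun q : MM n => q.1 ^ (l - 1))
      ((powD n (l - 1) p.1).comp (ContinuousLinearMap.fst ℝ _ _)) p :=
    (hasFDerivAt_matpow (l - 1) p.1).comp p (hasFDerivAt_fst)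
  have h := (mulL n).hasFDerivAt_of_bilinear h1 (hasFDerivAt_snd (p := p))
  have h2 := ((traceL n).hasFDerivAt).comp p h
  have : Jhat (n := n) l = fun q : MM n => traceL n (mulL n (q.1 ^ (l - 1)) q.2) := by
    funext q; simp [Jhat]
  rw [this]
  exact h2

lemma gradY_Jhat {n : ℕ} (l : ℕ) (p : MM n) : gradY (Jhat l) p = p.1 ^ (l - 1) := by
  funext i j
  rw [gradY, show fderiv ℝ (Jhat l) p = _ from (hasFDerivAt_Jhat l p).fderiv]
  change (p.1 ^ (l - 1) * Matrix.single j i 1 + powD n (l - 1) p.1 0 * p.2).trace = _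
  simp [trace_mul_stdBasis]

lemma pbracket_key {n : ℕ} (k l m : ℕ) (hk : 1 ≤ k) (hl : 1 ≤ l) (p : MM n) :
    pbracket m (Jhat l) (Ihat k) p = (p.1 ^ (k + l + m - 2)).trace := by
  rw [pbracket, gradY_Ihat, gradY_Jhat, gradX_Ihat k hk]
  simp only [Matrix.mul_zero, Matrix.zero_mul, sub_zero, zero_sub, Matrix.trace_zero,
    Finset.sum_const_zero, add_zero, Matrix.mul_zero, neg_zero]
  rw [← pow_add, ← pow_add]
  congr 2
  omega


/-- For all `k, ℓ ≥ 1` and `m ≥ 0` one has `{Ĵ_ℓ, Î_k}_m(X,Y) = tr(X^{k+ℓ+m−2})`; in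
particular `{Ĵ_ℓ, Î_k}_m = (k+ℓ+m−2) Î_{k+ℓ+m−2}` whenever `k+ℓ+m ≥ 3`, while
`{Ĵ_1, Î_1}_0` is the constant function `n`. -/
theorem Jhat_Ihat_bracket (n : ℕ) (hn : 1 ≤ n) (k l m : ℕ) (hk : 1 ≤ k) (hl : 1 ≤ l) :
    (∀ p : MM n, pbracket m (Jhat l) (Ihat k) p = (p.1 ^ (k + l + m - 2)).trace) ∧
    (3 ≤ k + l + m →
      ∀ p : MM n, pbracket m (Jhat l) (Ihat k) p =
        ((k + l + m - 2 : ℕ) : ℝ) * Ihat (k + l + m - 2) p) ∧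
    (∀ p : MM n, pbracket 0 (Jhat 1) (Ihat 1) p = (n : ℝ)) := by
  refine ⟨fun p => pbracket_key k l m hk hl p, fun hc p => ?_, fun p => ?_⟩
  · rw [pbracket_key k l m hk hl p, Ihat]
    have hne : ((k + l + m - 2 : ℕ) : ℝ) ≠ 0 := Nat.cast_ne_zero.mpr (by omega)
    rw [← mul_assoc, mul_one_div_cancel hne, one_mul]
  · rw [pbracket_key 1 1 0 le_rfl le_rfl p]
    simp
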